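/- arXiv:2409.12487 — 2 statements merged into one kernel-verified Lean document; each statement's English description precedes it below -/
import Mathlib

section
/- Let K be a closed convex cone in ℝⁿ, Γ a nonzero vector, and H = {x : Γᵀx = 0} the hyperplane orthogonal to Γ. Suppose for every v ∈ K with Γᵀv > 0 there exists v' ∈ K with Γᵀv' ≤ 0 and v − v' parallel to Γ, and symmetrically for Γᵀv < 0. Then for every v ∈ K, the orthogonal projection of v onto H lies in K. -/
/-!
The segment `[v, v']` runs parallel to `Γ` from a point with `⟪Γ, v⟫ ≥ 0` to a point with
`⟪Γ, v'⟫ ≤ 0`, so it crosses the hyperplane `Γ^⊥`; the crossing point is the orthogonal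
projection of `v` onto `Γ^⊥`, and it lies in `K` by convexity. The case `⟪Γ, v⟫ < 0` is the
same argument for `-Γ`.
-/

open RealInnerProductSpace

theorem Convex.sub_smul_mem_of_sub_eq_smul {𝕜 E : Type*} [Field 𝕜] [LinearOrder 𝕜]
    [IsStrictOrderedRing 𝕜] [AddCommGroup E] [Module 𝕜 E] {K : Set E} (hK : Convex 𝕜 K)
    {v v' w : E} {β t : 𝕜} (hv : v ∈ K) (hv' : v' ∈ K) (hvv' : v - v' = β • w)
    (ht : 0 ≤ t) (htβ : t ≤ β) : v - t • w ∈ K := by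
  rcases htβ.eq_or_lt with rfl | htβ
  · simpa [← hvv'] using hv'
  have hβ : β ≠ 0 := (ht.trans_lt htβ).ne'
  have hsegment : v - t • w = v + (t / β) • (v' - v) := by
    rw [← neg_sub v v', hvv', smul_neg, smul_smul, div_mul_cancel₀ t hβ, sub_eq_add_neg]
  rw [hsegment]
  exact hK.add_smul_sub_mem hv hv'
    ⟨div_nonneg ht (ht.trans htβ.le), (div_le_one (ht.trans_lt htβ)).2 htβ.le⟩

theorem Convex.sub_inner_div_norm_sq_smul_mem {E : Type*} [NormedAddCommGroup E]
    [InnerProductSpace ℝ E] {K : Set E} (hK : Convex ℝ K) {v v' w : E} {β : ℝ}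
    (hv : v ∈ K) (hv' : v' ∈ K) (hvw : 0 ≤ ⟪w, v⟫) (hv'w : ⟪w, v'⟫ ≤ 0) (hβ : 0 ≤ β)
    (hvv' : v - v' = β • w) : v - (⟪w, v⟫ / ‖w‖ ^ 2) • w ∈ K := by
  have hinner_sub : ⟪w, v⟫ - ⟪w, v'⟫ = β * ‖w‖ ^ 2 := by
    rw [← inner_sub_right, hvv', real_inner_smul_right, real_inner_self_eq_norm_sq]
  refine hK.sub_smul_mem_of_sub_eq_smul hv hv' hvv' (by positivity) ?_
  exact div_le_of_le_mul₀ (sq_nonneg _) hβ (by linarith)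

theorem projection_onto_reaction_hyperplane_in_cone_general
    (n : ℕ) (K : Set (EuclideanSpace ℝ (Fin n)))
    (hKconv : Convex ℝ K)
    (Γ : EuclideanSpace ℝ (Fin n))
    (hpos : ∀ v ∈ K, (0:ℝ) < inner ℝ Γ v →
      ∃ v' ∈ K, (inner ℝ Γ v' : ℝ) ≤ 0 ∧ ∃ β : ℝ, 0 < β ∧ v - v' = β • Γ)
    (hneg : ∀ v ∈ K, (inner ℝ Γ v : ℝ) < 0 →
      ∃ v' ∈ K, (0:ℝ) ≤ inner ℝ Γ v' ∧ ∃ β : ℝ, 0 < β ∧ v' - v = β • Γ) :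
    ∀ v ∈ K, v - ((inner ℝ Γ v : ℝ) / ‖Γ‖ ^ 2) • Γ ∈ K := by
  intro v hv
  rcases lt_trichotomy (inner ℝ Γ v) 0 with hlt | h0 | hgt
  · obtain ⟨v', hv', hv'Γ, β, hβ, hvv'⟩ := hneg v hv hlt
    have hproj := hKconv.sub_inner_div_norm_sq_smul_mem (w := -Γ) hv hv'
      (by simpa [inner_neg_left] using hlt.le) (by simpa [inner_neg_left] using hv'Γ) hβ.le
      (by rw [smul_neg, ← hvv', neg_sub])
    simpa [inner_neg_left, neg_div] using hproj
  · simpa [h0] using hv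
  · obtain ⟨v', hv', hv'Γ, β, hβ, hvv'⟩ := hpos v hv hgt
    exact hKconv.sub_inner_div_norm_sq_smul_mem hv hv' hgt.le hv'Γ hβ.le hvv'

/-- If a closed convex cone `K` allows "subtracting off" a multiple of `Γ` from any
`v ∈ K` on the positive side of `Γ^⊥` (and symmetrically on the negative side), then
`K` contains the orthogonal projection of each of its elements onto the hyperplane
`H = {x : ⟪Γ, x⟫ = 0}`. -/
theorem projection_onto_reaction_hyperplane_in_cone
    (n : ℕ) (K : Set (EuclideanSpace ℝ (Fin n)))
    (hKclosed : IsClosed K) (hKconv : Convex ℝ K)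
    (hKcone : ∀ (c : ℝ), 0 < c → ∀ x ∈ K, c • x ∈ K)
    (Γ : EuclideanSpace ℝ (Fin n)) (hΓ : Γ ≠ 0)
    (hpos : ∀ v ∈ K, (0:ℝ) < inner ℝ Γ v →
      ∃ v' ∈ K, (inner ℝ Γ v' : ℝ) ≤ 0 ∧ ∃ β : ℝ, 0 < β ∧ v - v' = β • Γ)
    (hneg : ∀ v ∈ K, (inner ℝ Γ v : ℝ) < 0 →
      ∃ v' ∈ K, (0:ℝ) ≤ inner ℝ Γ v' ∧ ∃ β : ℝ, 0 < β ∧ v' - v = β • Γ) :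
    ∀ v ∈ K, v - ((inner ℝ Γ v : ℝ) / ‖Γ‖ ^ 2) • Γ ∈ K :=
  projection_onto_reaction_hyperplane_in_cone_general n K hKconv Γ hpos hneg
end

section
/- Let P₁, ..., Pₘ be orthogonal projections onto closed subspaces H₁, ..., Hₘ of ℝⁿ, and let K be a closed set invariant under each Pᵢ (Pᵢ(K) ⊆ K). Then K is invariant under the orthogonal projection onto the intersection ⋂ᵢ Hᵢ: for every v ∈ K, the projection of v onto ⋂ᵢ Hᵢ lies in K. -/
/-!
Let `T` be the composition of the projections `P_{Hᵢ}` and `M = ⋂ Hᵢ`. Then `T` fixes `M`,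
preserves `Mᗮ`, and, since `‖P_H x‖ = ‖x‖` forces `x ∈ H`, strictly shrinks every nonzero vector
of `Mᗮ`. By compactness of the unit sphere, `T` is therefore a strict contraction on `Mᗮ`, so
`Tᵏ v → P_M v`. Every `Tᵏ v` lies in the closed set `K`, hence so does the limit.
-/

open Filter Topology Set

namespace ContinuousLinearMap

variable {𝕜 E F : Type*} [RCLike 𝕜] [NormedAddCommGroup E] [NormedSpace 𝕜 E]
  [FiniteDimensional 𝕜 E] [SeminormedAddCommGroup F] [NormedSpace 𝕜 F]

theorem opNorm_lt_one_of_norm_apply_lt (f : E →L[𝕜] F) (hf : ∀ x, x ≠ 0 → ‖f x‖ < ‖x‖) :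
    ‖f‖ < 1 := by
  cases subsingleton_or_nontrivial E
  · simp [Subsingleton.elim f 0]
  have := FiniteDimensional.proper_rclike 𝕜 E
  obtain ⟨x₀, hx₀, hmax⟩ := (isCompact_sphere (0 : E) 1).exists_isMaxOn
    (nonempty_coe_sort.mp (NormedSpace.sphere_nonempty_rclike 𝕜 zero_le_one))
    (by fun_prop : Continuous fun x => ‖f x‖).continuousOn
  have hx₀ : ‖x₀‖ = 1 := mem_sphere_zero_iff_norm.mp hx₀
  calc ‖f‖ ≤ ‖f x₀‖ := opNorm_le_of_unit_norm (norm_nonneg _) fun x hx =>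
        hmax (mem_sphere_zero_iff_norm.mpr hx)
    _ < 1 := hx₀ ▸ hf x₀ (ne_of_apply_ne norm (by simp [hx₀]))

end ContinuousLinearMap

namespace Submodule

variable {𝕜 E ι : Type*} [RCLike 𝕜] [NormedAddCommGroup E] [InnerProductSpace 𝕜 E]

theorem mem_of_norm_starProjection_apply_eq (U : Submodule 𝕜 E) [U.HasOrthogonalProjection]
    {x : E} (hx : ‖U.starProjection x‖ = ‖x‖) : x ∈ U := by
  have hpyth := norm_sq_eq_add_norm_sq_starProjection x U
  rw [hx, left_eq_add, sq_eq_zero_iff, norm_eq_zero, starProjection_orthogonal',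
    sub_apply, one_apply_eq_self, sub_eq_zero] at hpyth
  exact starProjection_eq_self_iff.mp hpyth.symm

theorem starProjection_apply_mem_orthogonal {U M : Submodule 𝕜 E} [U.HasOrthogonalProjection]
    (hMU : M ≤ U) {y : E} (hy : y ∈ Mᗮ) : U.starProjection y ∈ Mᗮ := by
  rw [← sub_sub_cancel y (U.starProjection y)]
  exact Mᗮ.sub_mem hy (orthogonal_le hMU (sub_starProjection_mem_orthogonal y))

/-- `P_{H i₁} ∘ ⋯ ∘ P_{H iₖ}` for `l = [i₁, …, iₖ]`. -/
noncomputable def starProjectionProd (H : ι → Submodule 𝕜 E) [∀ i, (H i).HasOrthogonalProjection]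
    (l : List ι) : E →L[𝕜] E :=
  (l.map fun i => (H i).starProjection).prod

variable (H : ι → Submodule 𝕜 E) [∀ i, (H i).HasOrthogonalProjection]

@[simp]
theorem starProjectionProd_nil : starProjectionProd H [] = 1 := rfl

@[simp]
theorem starProjectionProd_cons (i : ι) (l : List ι) :
    starProjectionProd H (i :: l) = (H i).starProjection * starProjectionProd H l := rfl

theorem starProjectionProd_apply_of_forall_mem {l : List ι} {x : E} (hx : ∀ i ∈ l, x ∈ H i) :
    starProjectionProd H l x = x := by
  induction l with
  | nil => rfl
  | cons i l ih =>
    simp only [List.forall_mem_cons] at hx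
    simp [ih hx.2, starProjection_eq_self_iff.mpr hx.1]

theorem norm_starProjectionProd_apply_le (l : List ι) (x : E) :
    ‖starProjectionProd H l x‖ ≤ ‖x‖ := by
  induction l with
  | nil => simp
  | cons i l ih => exact ((H i).norm_starProjection_apply_le _).trans ih

theorem forall_mem_of_norm_starProjectionProd_apply_eq {l : List ι} {x : E}
    (hx : ‖starProjectionProd H l x‖ = ‖x‖) : ∀ i ∈ l, x ∈ H i := by
  induction l with
  | nil => simp
  | cons i l ih =>
    have hl : ‖starProjectionProd H l x‖ = ‖x‖ :=
      le_antisymm (norm_starProjectionProd_apply_le H l x)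
        (hx.symm.le.trans ((H i).norm_starProjection_apply_le _))
    have hmem := ih hl
    rw [starProjectionProd_cons, mul_apply_eq_comp,
      starProjectionProd_apply_of_forall_mem H hmem] at hx
    exact List.forall_mem_cons.mpr ⟨mem_of_norm_starProjection_apply_eq _ hx, hmem⟩

theorem starProjectionProd_apply_mem_orthogonal {M : Submodule 𝕜 E} {l : List ι}
    (hM : ∀ i ∈ l, M ≤ H i) {y : E} (hy : y ∈ Mᗮ) : starProjectionProd H l y ∈ Mᗮ := by
  induction l with
  | nil => exact hy
  | cons i l ih =>
    simp only [List.forall_mem_cons] at hM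
    exact starProjection_apply_mem_orthogonal hM.1 (ih hM.2)

theorem mapsTo_starProjectionProd {K : Set E} {l : List ι}
    (hK : ∀ i ∈ l, MapsTo (H i).starProjection K K) : MapsTo (starProjectionProd H l) K K := by
  induction l with
  | nil => exact mapsTo_id K
  | cons i l ih =>
    simp only [List.forall_mem_cons] at hK
    exact hK.1.comp (ih hK.2)

section FiniteDimensional

variable [FiniteDimensional 𝕜 E]

theorem tendsto_pow_apply_starProjection {f : E →L[𝕜] E} {M : Submodule 𝕜 E}
    (hfix : ∀ x ∈ M, f x = x) (hperp : ∀ y ∈ Mᗮ, f y ∈ Mᗮ)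
    (hlt : ∀ y ∈ Mᗮ, y ≠ 0 → ‖f y‖ < ‖y‖) (x : E) :
    Tendsto (fun k => (f ^ k) x) atTop (𝓝 (M.starProjection x)) := by
  -- `g` agrees with `f` on `Mᗮ` and shrinks every nonzero vector of `E`, so `‖g‖ < 1`.
  set g := f ∘L Mᗮ.starProjection
  have hg : ‖g‖ < 1 := by
    refine g.opNorm_lt_one_of_norm_apply_lt fun x hx => ?_
    by_cases hx' : Mᗮ.starProjection x = 0
    · simpa [g, hx'] using hx
    · exact (hlt _ (starProjection_apply_mem _ x) hx').trans_le (norm_starProjection_apply_le _ x)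
  have hfix_pow : ∀ k, ∀ x ∈ M, (f ^ k) x = x := fun k x hx => by
    induction k with
    | zero => rfl
    | succ k ih => rw [pow_succ, mul_apply_eq_comp, hfix x hx, ih]
  have hperp_pow : ∀ k, ∀ y ∈ Mᗮ, (f ^ k) y = (g ^ k) y := by
    intro k
    induction k with
    | zero => exact fun _ _ => rfl
    | succ k ih =>
      intro y hy
      have hgy : g y = f y := congrArg f (starProjection_eq_self_iff.mpr hy)
      rw [pow_succ, pow_succ, mul_apply_eq_comp, mul_apply_eq_comp, hgy, ih _ (hperp y hy)]
  have hsplit : ∀ k, (f ^ k) x = M.starProjection x + (g ^ k) (Mᗮ.starProjection x) := by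
    intro k
    conv_lhs => rw [← M.starProjection_add_starProjection_orthogonal x]
    rw [map_add, hfix_pow k _ (starProjection_apply_mem _ x),
      hperp_pow k _ (starProjection_apply_mem _ x)]
  have hg_pow : Tendsto (fun k => (g ^ k) (Mᗮ.starProjection x)) atTop (𝓝 0) := by
    have := ((ContinuousLinearMap.apply 𝕜 E (Mᗮ.starProjection x)).continuous.tendsto 0).comp
      (tendsto_pow_atTop_nhds_zero_of_norm_lt_one hg)
    simpa only [Function.comp_def, ContinuousLinearMap.apply_apply, zero_apply] using this
  simpa only [hsplit, add_zero] using (tendsto_const_nhds (x := M.starProjection x)).add hg_pow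

theorem tendsto_starProjectionProd_pow_apply {l : List ι} (hl : ∀ i, i ∈ l) (x : E) :
    Tendsto (fun k => (starProjectionProd H l ^ k) x) atTop (𝓝 ((⨅ i, H i).starProjection x)) := by
  refine tendsto_pow_apply_starProjection
    (fun y hy => starProjectionProd_apply_of_forall_mem H fun i _ => mem_iInf H |>.mp hy i)
    (fun y => starProjectionProd_apply_mem_orthogonal H fun i _ => iInf_le H i)
    (fun y hy hy0 => (norm_starProjectionProd_apply_le H l y).lt_of_ne fun heq => hy0 ?_) x
  have hyM : y ∈ ⨅ i, H i :=
    mem_iInf H |>.mpr fun i => forall_mem_of_norm_starProjectionProd_apply_eq H heq i (hl i)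
  exact inner_self_eq_zero.mp (inner_right_of_mem_orthogonal hyM hy)

end FiniteDimensional

end Submodule

/-- If a closed set `K ⊆ ℝⁿ` is invariant under the orthogonal projections onto
subspaces `H₁, ..., Hₘ`, then it is invariant under the orthogonal projection onto
their intersection. -/
theorem closed_set_invariant_projection_inf
    (n m : ℕ) (H : Fin m → Submodule ℝ (EuclideanSpace ℝ (Fin n)))
    (K : Set (EuclideanSpace ℝ (Fin n))) (hKclosed : IsClosed K)
    (hinv : ∀ i : Fin m, ∀ v ∈ K,
      (((H i).orthogonalProjectionOnto v : EuclideanSpace ℝ (Fin n))) ∈ K) :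
    ∀ v ∈ K, (((⨅ i, H i).orthogonalProjectionOnto v : EuclideanSpace ℝ (Fin n))) ∈ K := by
  intro v hv
  set T := Submodule.starProjectionProd H (List.finRange m)
  have hT : MapsTo T K K := Submodule.mapsTo_starProjectionProd H fun i _ => hinv i
  have hTk : ∀ k, (T ^ k) v ∈ K := fun k => pow_apply_eq_iterate T k v ▸ hT.iterate k hv
  exact hKclosed.mem_of_tendsto
    (Submodule.tendsto_starProjectionProd_pow_apply H List.mem_finRange v)
    (Eventually.of_forall hTk)
end
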